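/- Let (Y, ℝ) be a free dynamical system on a compact metric space Y (so y + r = y with r ∈ ℝ implies r = 0), let w ∈ Y, and let α, β > 0. Then there exist an open neighborhood W of w and a finite open cover V of Y with ord(V) ≤ 3 such that V is (α, β)-refined at W. -/

import Mathlib

/-- The order of a finite family of sets: the maximal number of its members
having a common point. -/
noncomputable def ordCover {Y : Type*} (A : Finset (Set Y)) : ℕ :=
  sSup {n : ℕ | ∃ y : Y, ∃ B ⊆ A, B.card = n ∧ ∀ s ∈ B, y ∈ s}

/-- A collection `V` of subsets of `Y` is `(α, β)`-refined at `W` (with respect to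
the flow `ρ`) if: (1) no element of `V + r` meets the closures of both `W + r₁` and
`W + r₂` for `r, r₁, r₂ ∈ [−β, β]` with `|r₁ − r₂| ≥ 1`; and (2) whenever
`V + [−β, β]` meets the closure of `W + [−β, β]` for `V ∈ V`, then
`diam (V + r) < α` for all `r ∈ [−β, β]`. -/
def RefinedAt {Y : Type*} [MetricSpace Y] (ρ : ℝ → Y → Y)
    (V : Finset (Set Y)) (W : Set Y) (α β : ℝ) : Prop :=
  (∀ s ∈ V, ∀ r ∈ Set.Icc (-β) β, ∀ r₁ ∈ Set.Icc (-β) β, ∀ r₂ ∈ Set.Icc (-β) β,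
    1 ≤ |r₁ - r₂| →
    ¬((ρ r '' s ∩ closure (ρ r₁ '' W)).Nonempty ∧
      (ρ r '' s ∩ closure (ρ r₂ '' W)).Nonempty)) ∧
  (∀ s ∈ V,
    ((⋃ r ∈ Set.Icc (-β) β, ρ r '' s) ∩
      closure (⋃ r ∈ Set.Icc (-β) β, ρ r '' W)).Nonempty →
    ∀ r ∈ Set.Icc (-β) β, Metric.diam (ρ r '' s) < α)

/-! Freeness makes `t ↦ w + t` injective, so over the compact time interval `[-2β, 2β]` the orbit
is an arc `A` on which points at time distance `≥ 1` stay a uniform distance `G` apart. Thin open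
tubes around short consecutive sub-arcs, non-adjacent ones disjoint, together with the complement
of a closed neighbourhood of `A` form a cover of order at most 3. For a small ball `W` around `w`,
each `W + r` stays close to `w + r`: a thin tube moved by `r` is too small to reach both `W + r₁`
and `W + r₂` when `|r₁ - r₂| ≥ 1`, and the complement piece moved by `r` misses the closure of
`W + [-β, β]`, since flowing back by `-r` would bring one of its points into the neighbourhood
of `A`. -/

open Set Metric

lemma IsCompact.exists_pos_forall_dist_lt_of_continuous_uncurry {X Y Z : Type*}
    [PseudoMetricSpace X] [PseudoMetricSpace Y] [CompactSpace Y] [PseudoMetricSpace Z]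
    {f : X → Y → Z} (hf : Continuous (Function.uncurry f)) {K : Set X} (hK : IsCompact K)
    {η : ℝ} (hη : 0 < η) :
    ∃ ζ > 0, ∀ t ∈ K, ∀ x y, dist x y < ζ → dist (f t x) (f t y) < η := by
  have huc := (hK.prod isCompact_univ).uniformContinuousOn_of_continuous hf.continuousOn
  obtain ⟨ζ, hζ, hfζ⟩ := uniformContinuousOn_iff.mp huc η hη
  refine ⟨ζ, hζ, fun t ht x y hxy => hfζ (t, x) ⟨ht, trivial⟩ (t, y) ⟨ht, trivial⟩ ?_⟩
  simpa [Prod.dist_eq, hζ] using hxy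

lemma IsCompact.exists_pos_le_dist_of_injOn {X Y : Type*} [MetricSpace X] [MetricSpace Y]
    {c : X → Y} {K : Set X} (hK : IsCompact K) (hc : ContinuousOn c K) (hinj : InjOn c K)
    {L : ℝ} (hL : 0 < L) :
    ∃ G > 0, ∀ s ∈ K, ∀ t ∈ K, L ≤ dist s t → G ≤ dist (c s) (c t) := by
  let P : Set (X × X) := (K ×ˢ K) ∩ {p | L ≤ dist p.1 p.2}
  have hP : IsCompact P :=
    (hK.prod hK).inter_right (isClosed_le continuous_const (continuous_fst.dist continuous_snd))
  have hcP : ContinuousOn (fun p : X × X => dist (c p.1) (c p.2)) P :=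
    continuous_dist.comp_continuousOn ((hc.comp continuousOn_fst fun _ hp => hp.1.1).prodMk
      (hc.comp continuousOn_snd fun _ hp => hp.1.2))
  obtain ⟨G, hG, hGP⟩ := hP.exists_forall_le' hcP fun p ⟨⟨hp₁, hp₂⟩, hLp⟩ =>
    dist_pos.mpr fun h => (hL.trans_le hLp).ne' (dist_eq_zero.mpr (hinj hp₁ hp₂ h))
  exact ⟨G, hG, fun s hs t ht hst => hGP (s, t) ⟨⟨hs, ht⟩, hst⟩⟩

lemma Finset.card_le_two_of_forall_le_add_one {S : Finset ℤ}
    (hS : ∀ k ∈ S, ∀ l ∈ S, l ≤ k + 1) : S.card ≤ 2 := by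
  rcases S.eq_empty_or_nonempty with rfl | hne
  · simp
  calc S.card ≤ (Finset.Icc (S.min' hne) (S.min' hne + 1)).card :=
        Finset.card_le_card fun l hl =>
          Finset.mem_Icc.mpr ⟨S.min'_le l hl, hS _ (S.min'_mem hne) l hl⟩
    _ = 2 := by rw [Int.card_Icc]; omega

lemma ordCover_insert_image_le_three {Y : Type*} (U : Set Y) (F : Finset ℤ) (T : ℤ → Set Y)
    (hT : ∀ k l, k + 2 ≤ l → Disjoint (T k) (T l)) :
    ordCover (insert U (F.image T)) ≤ 3 := by
  classical
  refine csSup_le' ?_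
  rintro n ⟨y, B, hB, rfl, hyB⟩
  set S := F.filter (y ∈ T ·)
  have hBS : B ⊆ insert U (S.image T) := by
    intro s hs
    rcases Finset.mem_insert.mp (hB hs) with rfl | hsT
    · exact Finset.mem_insert_self _ _
    · obtain ⟨k, hk, rfl⟩ := Finset.mem_image.mp hsT
      exact Finset.mem_insert_of_mem (Finset.mem_image_of_mem T (by simp [S, hk, hyB _ hs]))
  have hS : S.card ≤ 2 := Finset.card_le_two_of_forall_le_add_one fun k hk l hl => by
    by_contra! hkl
    exact Set.disjoint_left.mp (hT k l (by omega)) (Finset.mem_filter.mp hk).2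
      (Finset.mem_filter.mp hl).2
  calc B.card ≤ (insert U (S.image T)).card := Finset.card_le_card hBS
    _ ≤ (S.image T).card + 1 := Finset.card_insert_le _ _
    _ ≤ S.card + 1 := by gcongr; exact Finset.card_image_le
    _ ≤ 3 := by omega

lemma mem_Icc_floor_div_mul (u : ℝ) {h : ℝ} (hh : 0 < h) :
    u ∈ Icc (⌊u / h⌋ * h) ((⌊u / h⌋ + 1) * h) :=
  ⟨(le_div_iff₀ hh).mp (Int.floor_le _), ((div_le_iff₀ hh).mp (Int.lt_floor_add_one _).le)⟩

lemma exists_tube_chain {Y : Type*} [MetricSpace Y] {c : ℝ → Y} {a b ζ : ℝ}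
    (hc : ContinuousOn c (Icc a b)) (hinj : InjOn c (Icc a b)) (hζ : 0 < ζ) :
    ∃ ε > 0, ∃ F : Finset ℤ, ∃ T : ℤ → Set Y, (∀ k, IsOpen (T k)) ∧
      (∀ k, ∀ x ∈ T k, ∀ y ∈ T k, dist x y < ζ) ∧
      cthickening ε (c '' Icc a b) ⊆ ⋃ k ∈ F, T k ∧
      ∀ k l, k + 2 ≤ l → Disjoint (T k) (T l) := by
  obtain ⟨δ, hδ, hcδ⟩ := uniformContinuousOn_iff.mp
    (isCompact_Icc.uniformContinuousOn_of_continuous hc) (ζ / 2) (by positivity)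
  obtain ⟨h, hh, hhδ⟩ : ∃ h, 0 < h ∧ h < δ := ⟨δ / 2, by positivity, by linarith⟩
  obtain ⟨G, hG, hcG⟩ := isCompact_Icc.exists_pos_le_dist_of_injOn hc hinj hh
  obtain ⟨ε, hε, hεζ, hεG⟩ : ∃ ε, 0 < ε ∧ ε ≤ ζ / 4 ∧ ε ≤ G / 2 :=
    ⟨min (ζ / 4) (G / 2), by positivity, min_le_left _ _, min_le_right _ _⟩
  let P : ℤ → Set ℝ := fun k => Icc (k * h) ((k + 1) * h) ∩ Icc a b
  refine ⟨ε / 2, by positivity, Finset.Icc ⌊a / h⌋ ⌊b / h⌋, fun k => thickening ε (c '' P k),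
    fun k => isOpen_thickening, ?_, ?_, ?_⟩
  · rintro k x hx y hy
    obtain ⟨_, ⟨s, hs, rfl⟩, hxs⟩ := mem_thickening_iff.mp hx
    obtain ⟨_, ⟨t, ht, rfl⟩, hyt⟩ := mem_thickening_iff.mp hy
    have hst : dist (c s) (c t) < ζ / 2 := hcδ s hs.2 t ht.2 (by
      rw [Real.dist_eq, abs_lt]; constructor <;> linarith [hs.1.1, hs.1.2, ht.1.1, ht.1.2])
    calc dist x y ≤ dist x (c s) + dist (c s) (c t) + dist (c t) y := dist_triangle4 _ _ _ _
      _ < ε + ζ / 2 + ε := by rw [dist_comm (c t)]; gcongr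
      _ ≤ ζ := by linarith
  · intro x hx
    obtain ⟨_, ⟨u, hu, rfl⟩, hxu⟩ :=
      mem_thickening_iff.mp (cthickening_subset_thickening' hε (by linarith) _ hx)
    have hk : ⌊u / h⌋ ∈ Finset.Icc ⌊a / h⌋ ⌊b / h⌋ := Finset.mem_Icc.mpr
      ⟨Int.floor_mono (by gcongr; exact hu.1), Int.floor_mono (by gcongr; exact hu.2)⟩
    exact mem_biUnion hk (mem_thickening_iff.mpr
      ⟨c u, mem_image_of_mem c ⟨mem_Icc_floor_div_mul u hh, hu⟩, hxu⟩)
  · intro k l hkl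
    refine Set.disjoint_left.mpr fun x hxk hxl => ?_
    obtain ⟨_, ⟨s, hs, rfl⟩, hxs⟩ := mem_thickening_iff.mp hxk
    obtain ⟨_, ⟨t, ht, rfl⟩, hxt⟩ := mem_thickening_iff.mp hxl
    have hkl' : (k : ℝ) + 2 ≤ l := by exact_mod_cast hkl
    have hst : h ≤ dist s t := by
      rw [Real.dist_eq, abs_sub_comm]
      exact le_abs.mpr (Or.inl (by nlinarith [hs.1.2, ht.1.1]))
    have := hcG s hs.2 t ht.2 hst
    have := dist_triangle_left (c s) (c t) x
    linarith

lemma exists_cover_of_arc {Y : Type*} [MetricSpace Y] {c : ℝ → Y} {a b ζ : ℝ}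
    (hc : ContinuousOn c (Icc a b)) (hinj : InjOn c (Icc a b)) (hζ : 0 < ζ) :
    ∃ ε > 0, ∃ V : Finset (Set Y), (∀ s ∈ V, IsOpen s) ∧ (∀ y, ∃ s ∈ V, y ∈ s) ∧
      ordCover V ≤ 3 ∧
      ∀ s ∈ V, s = (cthickening ε (c '' Icc a b))ᶜ ∨ ∀ x ∈ s, ∀ y ∈ s, dist x y < ζ := by
  classical
  obtain ⟨ε, hε, F, T, hTo, hTζ, hcov, hT⟩ := exists_tube_chain hc hinj hζ
  refine ⟨ε, hε, insert (cthickening ε (c '' Icc a b))ᶜ (F.image T), ?_, fun y => ?_,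
    ordCover_insert_image_le_three _ F T hT, ?_⟩
  · simp only [Finset.forall_mem_insert, Finset.forall_mem_image]
    exact ⟨isClosed_cthickening.isOpen_compl, fun k _ => hTo k⟩
  · by_cases hy : y ∈ cthickening ε (c '' Icc a b)
    · obtain ⟨k, hk, hyk⟩ := mem_iUnion₂.mp (hcov hy)
      exact ⟨T k, Finset.mem_insert_of_mem (Finset.mem_image_of_mem T hk), hyk⟩
    · exact ⟨_, Finset.mem_insert_self _ _, hy⟩
  · intro s hs
    rcases Finset.mem_insert.mp hs with rfl | hsT
    · exact Or.inl rfl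
    · obtain ⟨k, -, rfl⟩ := Finset.mem_image.mp hsT
      exact Or.inr (hTζ k)

lemma Flow.disjoint_biUnion_image_compl_closure {τ α : Type*} [TopologicalSpace τ]
    [AddGroup τ] [TopologicalSpace α] (ϕ : Flow τ α) {I : Set τ} {C W : Set α} (hC : IsClosed C)
    (hWC : ∀ r ∈ I, ∀ r' ∈ I, ∀ y ∈ W, ϕ (-r + r') y ∈ C) :
    Disjoint (⋃ r ∈ I, ϕ r '' Cᶜ) (closure (⋃ r ∈ I, ϕ r '' W)) := by
  simp only [disjoint_iUnion_left]
  intro r hr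
  rw [ϕ.image_eq_preimage_symm, preimage_compl, disjoint_compl_left_iff_subset]
  refine closure_minimal ?_ (hC.preimage (ϕ.continuous_toFun _))
  simp only [iUnion_subset_iff, image_subset_iff]
  intro r' hr' y hy
  simpa [← ϕ.map_add] using hWC r hr r' hr' y hy

lemma refinedAt_of_forall_disjoint_or {Y : Type*} [MetricSpace Y] (ρ : ℝ → Y → Y) (c : ℝ → Y)
    {V : Finset (Set Y)} {W : Set Y} {α β κ η : ℝ}
    (hW : ∀ r ∈ Icc (-β) β, ∀ y ∈ W, dist (ρ r y) (c r) ≤ κ)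
    (hc : ∀ r₁ ∈ Icc (-β) β, ∀ r₂ ∈ Icc (-β) β, 1 ≤ |r₁ - r₂| →
      2 * κ + η ≤ dist (c r₁) (c r₂))
    (hη : 0 ≤ η) (hηα : η < α)
    (hV : ∀ s ∈ V,
      Disjoint (⋃ r ∈ Icc (-β) β, ρ r '' s) (closure (⋃ r ∈ Icc (-β) β, ρ r '' W)) ∨
        ∀ r ∈ Icc (-β) β, ∀ x ∈ s, ∀ y ∈ s, dist (ρ r x) (ρ r y) < η) :
    RefinedAt ρ V W α β := by
  have hclosure : ∀ r ∈ Icc (-β) β, closure (ρ r '' W) ⊆ closedBall (c r) κ := fun r hr =>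
    closure_minimal (by rintro _ ⟨y, hy, rfl⟩; exact hW r hr y hy) isClosed_closedBall
  have hbox : ∀ r ∈ Icc (-β) β, closure (ρ r '' W) ⊆ closure (⋃ r ∈ Icc (-β) β, ρ r '' W) :=
    fun r hr => closure_mono (subset_biUnion_of_mem (u := fun r => ρ r '' W) hr)
  constructor
  · rintro s hs r hr r₁ hr₁ r₂ hr₂ h12 ⟨⟨_, ⟨x, hx, rfl⟩, hx₁⟩, ⟨_, ⟨y, hy, rfl⟩, hy₂⟩⟩
    rcases hV s hs with hfar | hthin
    · exact Set.disjoint_left.mp hfar (mem_biUnion hr (mem_image_of_mem _ hx))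
        (hbox r₁ hr₁ hx₁)
    · have := hc r₁ hr₁ r₂ hr₂ h12
      have := dist_triangle4 (c r₁) (ρ r x) (ρ r y) (c r₂)
      have := mem_closedBall'.mp (hclosure r₁ hr₁ hx₁)
      have := mem_closedBall.mp (hclosure r₂ hr₂ hy₂)
      linarith [hthin r hr x hx y hy]
  · rintro s hs hmeet r hr
    rcases hV s hs with hfar | hthin
    · exact absurd hmeet (Set.not_nonempty_iff_eq_empty.mpr hfar.inter_eq)
    · refine (diam_le_of_forall_dist_le hη ?_).trans_lt hηα
      rintro _ ⟨x, hx, rfl⟩ _ ⟨y, hy, rfl⟩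
      exact (hthin r hr x hx y hy).le

theorem stmt_15_general {Y : Type*} [MetricSpace Y] [CompactSpace Y]
    (ρ : ℝ → Y → Y)
    -- ρ is a continuous flow of ℝ on Y
    (hcont : Continuous fun p : ℝ × Y => ρ p.1 p.2)
    (hzero : ∀ y, ρ 0 y = y)
    (hadd : ∀ r s : ℝ, ∀ y, ρ (r + s) y = ρ r (ρ s y))
    -- the flow is free
    (hfree : ∀ r : ℝ, ∀ y : Y, ρ r y = y → r = 0)
    (w : Y) (α β : ℝ) (hα : 0 < α) :
    ∃ W : Set Y, ∃ V : Finset (Set Y),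
      IsOpen W ∧ w ∈ W ∧
      (∀ s ∈ V, IsOpen s) ∧ (∀ y : Y, ∃ s ∈ V, y ∈ s) ∧
      ordCover V ≤ 3 ∧ RefinedAt ρ V W α β := by
  let ϕ : Flow ℝ Y := ⟨ρ, hcont, hadd, hzero⟩
  have horbit : Continuous (ϕ · w) := ϕ.continuous continuous_id continuous_const
  have hinj : Function.Injective (ϕ · w) := fun s t hst => by
    have := hfree (s - t) (ρ t w) (by rw [← hadd, sub_add_cancel]; exact hst)
    linarith
  have hI : IsCompact (Icc (-β) β) := isCompact_Icc
  have hI₂ : IsCompact (Icc (-(2 * β)) (2 * β)) := isCompact_Icc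
  obtain ⟨G, hG, hsep⟩ := hI.exists_pos_le_dist_of_injOn horbit.continuousOn hinj.injOn one_pos
  obtain ⟨η, hη, hηα, hηG⟩ : ∃ η, 0 < η ∧ η < α ∧ η ≤ G / 2 :=
    ⟨min α G / 2, by positivity, by linarith [min_le_left α G], by linarith [min_le_right α G]⟩
  obtain ⟨ζ, hζ, hϕζ⟩ := hI.exists_pos_forall_dist_lt_of_continuous_uncurry ϕ.cont' hη
  obtain ⟨ε, hε, V, hVo, hVcov, hVord, hV⟩ :=
    exists_cover_of_arc horbit.continuousOn (hinj.injOn (s := Icc (-(2 * β)) (2 * β))) hζ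
  obtain ⟨κ, hκ, hκε, hκG⟩ : ∃ κ, 0 < κ ∧ κ ≤ ε ∧ κ ≤ G / 4 :=
    ⟨min ε (G / 4), by positivity, min_le_left _ _, min_le_right _ _⟩
  obtain ⟨δ, hδ, hϕδ⟩ := hI₂.exists_pos_forall_dist_lt_of_continuous_uncurry ϕ.cont' hκ
  have hW : ∀ u ∈ Icc (-(2 * β)) (2 * β), ∀ y ∈ ball w δ, dist (ϕ u y) (ϕ u w) ≤ κ :=
    fun u hu y hy => (hϕδ u hu y w hy).le
  refine ⟨ball w δ, V, isOpen_ball, mem_ball_self hδ, hVo, hVcov, hVord,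
    refinedAt_of_forall_disjoint_or ϕ (ϕ · w)
      (fun r ⟨hr₁, hr₂⟩ => hW r ⟨by linarith, by linarith⟩)
      (fun r₁ hr₁ r₂ hr₂ h => by linarith [hsep r₁ hr₁ r₂ hr₂ (by rwa [Real.dist_eq])])
      hη.le hηα fun s hs => ?_⟩
  rcases hV s hs with rfl | hthin
  · refine Or.inl (ϕ.disjoint_biUnion_image_compl_closure isClosed_cthickening
      fun r hr r' hr' y hy => ?_)
    have hu : -r + r' ∈ Icc (-(2 * β)) (2 * β) :=
      ⟨by linarith [hr.2, hr'.1], by linarith [hr.1, hr'.2]⟩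
    exact mem_cthickening_of_dist_le _ _ _ _ (mem_image_of_mem _ hu) ((hW _ hu y hy).trans hκε)
  · exact Or.inr fun r hr x hx y hy => hϕζ r hr x y (hthin x hx y hy)

theorem stmt_15 {Y : Type*} [MetricSpace Y] [CompactSpace Y]
    (ρ : ℝ → Y → Y)
    -- ρ is a continuous flow of ℝ on Y
    (hcont : Continuous fun p : ℝ × Y => ρ p.1 p.2)
    (hzero : ∀ y, ρ 0 y = y)
    (hadd : ∀ r s : ℝ, ∀ y, ρ (r + s) y = ρ r (ρ s y))
    -- the flow is free
    (hfree : ∀ r : ℝ, ∀ y : Y, ρ r y = y → r = 0)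
    (w : Y) (α β : ℝ) (hα : 0 < α) (hβ : 0 < β) :
    ∃ W : Set Y, ∃ V : Finset (Set Y),
      IsOpen W ∧ w ∈ W ∧
      (∀ s ∈ V, IsOpen s) ∧ (∀ y : Y, ∃ s ∈ V, y ∈ s) ∧
      ordCover V ≤ 3 ∧ RefinedAt ρ V W α β :=
  stmt_15_general ρ hcont hzero hadd hfree w α β hα
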